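/- arXiv:2407.18515 — 8 statements merged into one kernel-verified Lean document; each statement's English description precedes it below -/
import Mathlib

section
/- Among all VCG mechanisms sharing a fixed socially efficient option rule φ that are individually rational, the VCG-budget mechanism has pointwise minimal payments: if (φ, τ) is a VCG mechanism (τ_i(v) = Σ_{j≠i} v_j(φ(v)) − h_i(v_{-i}) for some h_i) that satisfies individual rationality, then τ_i^b(v) ≤ τ_i(v) for all i and v, and consequently the budget satisfies Σ_i τ_i^b(v) ≤ Σ_i τ_i(v) for all v. -/
/-!
Individual rationality at the profile where agent `i` reports `vᵢ'` reads
`hᵢ(v₋ᵢ) ≤ S(φ(v'); v') ≤ max_X S(X; v')`, because `hᵢ` ignores `i`'s own report.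
Minimizing over `vᵢ' ∈ Vᵢ` gives `hᵢ ≤ hᵢᵇ`, hence `τᵢᵇ ≤ τᵢ`.
-/

open Finset Function

section Welfare

variable {N X : Type*} [Fintype N] [Fintype X] [Nonempty X]

def maxWelfare (v : N → X → ℝ) : ℝ :=
  univ.sup' univ_nonempty fun x => ∑ j, v j x

lemma sum_le_maxWelfare (v : N → X → ℝ) (x : X) : ∑ j, v j x ≤ maxWelfare v :=
  le_sup' (fun x => ∑ j, v j x) (mem_univ x)

end Welfare

section VCG

variable {N X : Type*} [Fintype N] [DecidableEq N]
  {φ : (N → X → ℝ) → X} {h τ : N → (N → X → ℝ) → ℝ} {i : N} {v : N → X → ℝ}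

lemma le_sum_of_vcg_of_individuallyRational
    (hτ : τ i v = ∑ j ∈ univ.erase i, v j (φ v) - h i v)
    (hIR : 0 ≤ v i (φ v) + τ i v) :
    h i v ≤ ∑ j, v j (φ v) := by
  rw [← add_sum_erase univ (fun j => v j (φ v)) (mem_univ i)]
  linarith

variable [Fintype X] [Nonempty X] {V : N → Finset (X → ℝ)}

lemma le_maxWelfare_update_of_individuallyRational
    (hh : ∀ (i : N) (v : N → X → ℝ) (vi' : X → ℝ), h i (update v i vi') = h i v)
    (hτ : ∀ (i : N) (v : N → X → ℝ), τ i v = ∑ j ∈ univ.erase i, v j (φ v) - h i v)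
    (hIR : ∀ v : N → X → ℝ, (∀ i, v i ∈ V i) → ∀ i, 0 ≤ v i (φ v) + τ i v)
    (hv : ∀ j, v j ∈ V j) {vi' : X → ℝ} (hvi' : vi' ∈ V i) :
    h i v ≤ maxWelfare (update v i vi') := by
  set w := update v i vi'
  have hw : ∀ j, w j ∈ V j :=
    forall_update_iff v (p := fun j x => x ∈ V j) |>.mpr ⟨hvi', fun j _ => hv j⟩
  calc h i v = h i w := (hh i v vi').symm
    _ ≤ ∑ j, w j (φ w) := le_sum_of_vcg_of_individuallyRational (hτ i w) (hIR w hw i)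
    _ ≤ maxWelfare w := sum_le_maxWelfare w (φ w)

lemma le_inf'_maxWelfare_update_of_individuallyRational (hVne : ∀ i, (V i).Nonempty)
    (hh : ∀ (i : N) (v : N → X → ℝ) (vi' : X → ℝ), h i (update v i vi') = h i v)
    (hτ : ∀ (i : N) (v : N → X → ℝ), τ i v = ∑ j ∈ univ.erase i, v j (φ v) - h i v)
    (hIR : ∀ v : N → X → ℝ, (∀ i, v i ∈ V i) → ∀ i, 0 ≤ v i (φ v) + τ i v)
    (hv : ∀ j, v j ∈ V j) :
    h i v ≤ (V i).inf' (hVne i) fun vi' => maxWelfare (update v i vi') :=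
  le_inf' _ _ fun _ hvi' => le_maxWelfare_update_of_individuallyRational hh hτ hIR hv hvi'

end VCG

theorem vcg_budget_optimal_general {N X : Type*} [Fintype N] [DecidableEq N]
    [Fintype X] [Nonempty X]
    (V : N → Finset (X → ℝ)) (hVne : ∀ i, (V i).Nonempty)
    (φ : (N → (X → ℝ)) → X)
    (h : N → (N → (X → ℝ)) → ℝ) (τ : N → (N → (X → ℝ)) → ℝ)
    (hh : ∀ (i : N) (v : N → (X → ℝ)) (vi' : X → ℝ),
      h i (Function.update v i vi') = h i v)
    (hτ : ∀ (i : N) (v : N → (X → ℝ)),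
      τ i v = (∑ j ∈ Finset.univ.erase i, v j (φ v)) - h i v)
    (hIR : ∀ v : N → (X → ℝ), (∀ i, v i ∈ V i) → ∀ i : N,
      0 ≤ v i (φ v) + τ i v)
    (τb : N → (N → (X → ℝ)) → ℝ)
    (hτb : ∀ (i : N) (v : N → (X → ℝ)),
      τb i v = (∑ j ∈ Finset.univ.erase i, v j (φ v)) -
        (V i).inf' (hVne i) (fun vi' =>
          (Finset.univ : Finset X).sup' Finset.univ_nonempty
            (fun x => ∑ j, Function.update v i vi' j x))) :
    ∀ v : N → (X → ℝ), (∀ i, v i ∈ V i) →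
      (∀ i : N, τb i v ≤ τ i v) ∧ (∑ i, τb i v) ≤ ∑ i, τ i v := by
  intro v hv
  have payment_le : ∀ i, τb i v ≤ τ i v := fun i => by
    rw [hτb, hτ]
    exact sub_le_sub_left (le_inf'_maxWelfare_update_of_individuallyRational hVne hh hτ hIR hv) _
  exact ⟨payment_le, sum_le_sum fun i _ => payment_le i⟩

/-- VCG-budget has pointwise minimal payments, hence minimal budget, among all
individually rational VCG mechanisms sharing the socially efficient option rule φ. -/
theorem vcg_budget_optimal {N X : Type*} [Fintype N] [DecidableEq N]
    [Fintype X] [Nonempty X]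
    (V : N → Finset (X → ℝ)) (hVne : ∀ i, (V i).Nonempty)
    (φ : (N → (X → ℝ)) → X)
    (hSE : ∀ v : N → (X → ℝ), (∀ i, v i ∈ V i) →
      ∀ x : X, ∑ i, v i x ≤ ∑ i, v i (φ v))
    (h : N → (N → (X → ℝ)) → ℝ) (τ : N → (N → (X → ℝ)) → ℝ)
    (hh : ∀ (i : N) (v : N → (X → ℝ)) (vi' : X → ℝ),
      h i (Function.update v i vi') = h i v)
    (hτ : ∀ (i : N) (v : N → (X → ℝ)),
      τ i v = (∑ j ∈ Finset.univ.erase i, v j (φ v)) - h i v)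
    (hIR : ∀ v : N → (X → ℝ), (∀ i, v i ∈ V i) → ∀ i : N,
      0 ≤ v i (φ v) + τ i v)
    (τb : N → (N → (X → ℝ)) → ℝ)
    (hτb : ∀ (i : N) (v : N → (X → ℝ)),
      τb i v = (∑ j ∈ Finset.univ.erase i, v j (φ v)) -
        (V i).inf' (hVne i) (fun vi' =>
          (Finset.univ : Finset X).sup' Finset.univ_nonempty
            (fun x => ∑ j, Function.update v i vi' j x))) :
    ∀ v : N → (X → ℝ), (∀ i, v i ∈ V i) →
      (∀ i : N, τb i v ≤ τ i v) ∧ (∑ i, τb i v) ≤ ∑ i, τ i v :=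
  vcg_budget_optimal_general V hVne φ h τ hh hτ hIR τb hτb
end

section
/- Let φ be a socially efficient option rule. Fix an agent i and a profile v_{-i} of others' types. For any finite cyclic sequence v_i^{(1)}, …, v_i^{(k)} in V_i with v_i^{(0)} := v_i^{(k)}, the sum of 'regret weights' is nonnegative: Σ_{ℓ=1}^{k} [ v_i^{(ℓ)}(φ(v_i^{(ℓ)}, v_{-i})) − v_i^{(ℓ)}(φ(v_i^{(ℓ−1)}, v_{-i})) ] ≥ 0. In graph terms, the weighted directed graph on vertex set V_i ∪ {⋆} with edge weight c(v^{(1)}_i, v^{(2)}_i) = v^{(2)}_i(φ(v^{(2)}_i, v_{-i})) − v^{(2)}_i(φ(v^{(1)}_i, v_{-i})) has no negative directed cycle. -/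
/-- Total weight of the chain `s → l₀ → l₁ → ⋯` of edges with weights `c`. -/
def chainCost {α : Type*} (c : α → α → ℝ) : α → List α → ℝ
  | _, [] => 0
  | s, t :: l => c s t + chainCost c t l

lemma chain_bound {α : Type*} (c : α → α → ℝ) (D : α → ℝ) (l : List α)
    (hl : l ≠ []) (hc : ∀ s, ∀ t ∈ l, D s - D t ≤ c s t) (s : α) :
    D s - D (l.getLast hl) ≤ chainCost c s l := by
  induction l generalizing s with
  | nil => exact absurd rfl hl
  | cons t l ih =>
    rcases eq_or_ne l [] with rfl | h
    · simpa [chainCost, List.getLast] using hc s t (by simp)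
    · have h1 := hc s t (by simp)
      have h2 := ih h (fun s t ht => hc s t (List.mem_cons_of_mem _ ht)) t
      rw [List.getLast_cons h]
      simp only [chainCost]
      linarith

/-- For a socially efficient option rule, the regret-weight graph has no
negative directed cycle: for any cyclic sequence of types of agent `i`,
the sum of the edge weights is nonnegative. -/
theorem no_negative_cycle {N X : Type*} [Fintype N] [DecidableEq N]
    (V : N → Set (X → ℝ)) (φ : (N → (X → ℝ)) → X)
    (hSE : ∀ v : N → (X → ℝ), (∀ i, v i ∈ V i) →
      ∀ x : X, ∑ i, v i x ≤ ∑ i, v i (φ v))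
    (i : N) (v : N → (X → ℝ)) (hv : ∀ j, v j ∈ V j)
    (l : List (X → ℝ)) (hl : l ≠ []) (hmem : ∀ u ∈ l, u ∈ V i) :
    0 ≤ chainCost
      (fun s t => t (φ (Function.update v i t)) - t (φ (Function.update v i s)))
      (l.getLast hl) l := by
  set Φ : (X → ℝ) → X := fun t => φ (Function.update v i t) with hΦ
  set W : X → ℝ := fun x => ∑ j ∈ Finset.univ \ {i}, v j x with hW
  have key : ∀ s, ∀ t ∈ l, W (Φ s) - W (Φ t) ≤
      t (Φ t) - t (Φ s) := by
    intro s t ht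
    have hmemup : ∀ j, Function.update v i t j ∈ V j := by
      intro j
      rcases eq_or_ne j i with rfl | h
      · simpa using hmem t ht
      · simpa [Function.update_of_ne h] using hv j
    have expand : ∀ x, ∑ j, Function.update v i t j x = t x + W x := by
      intro x
      rw [Finset.sum_eq_sum_sdiff_singleton_add (Finset.mem_univ i)
          (fun j => Function.update v i t j x)]
      simp only [Function.update_self, hW, add_comm]
      congr 1
      refine Finset.sum_congr rfl fun j hj => ?_
      rw [Function.update_of_ne
        (fun h => (Finset.mem_sdiff.mp hj).2 (Finset.mem_singleton.mpr h))]
    have := hSE (Function.update v i t) hmemup (Φ s)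
    rw [expand, expand] at this
    simp only [hΦ] at this ⊢
    linarith
  have := chain_bound _ (fun t => W (Φ t)) l hl key (l.getLast hl)
  simpa using this
end

section
/- Fix a socially efficient option rule φ, an agent i, and others' types v_{-i}. Define for each v_i ∈ V_i the quantity d(v_i) as the shortest-path distance from the auxiliary source ⋆ to v_i in the directed graph with vertices V_i ∪ {⋆}, edge weight c(⋆, v_i') = v_i'(φ(v_i', v_{-i})), and c(v_i^{(1)}, v_i^{(2)}) = v_i^{(2)}(φ(v_i^{(2)}, v_{-i})) − v_i^{(2)}(φ(v_i^{(1)}, v_{-i})). Setting τ_i^*(v_i, v_{-i}) := −d(v_i), the resulting mechanism satisfies DSIC for agent i: v_i(φ(v_i, v_{-i})) + τ_i^*(v_i, v_{-i}) ≥ v_i(φ(v_i', v_{-i})) + τ_i^*(v_i', v_{-i}) for all v_i, v_i' ∈ V_i. -/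
/-- Cost of a directed path `⋆ → u₀ → u₁ → ⋯` from the auxiliary source `⋆`,
where `w0` gives the weights of edges out of `⋆` and `c` the remaining weights. -/
def pathCost {α : Type*} (w0 : α → ℝ) (c : α → α → ℝ) : List α → ℝ
  | [] => 0
  | u :: l => w0 u + chainCost c u l


lemma chainCost_append_two {α : Type*} (c : α → α → ℝ) (a b : α) :
    ∀ (s : α) (l : List α),
      chainCost c s (l ++ [a, b]) = chainCost c s (l ++ [a]) + c a b := by
  intro s l
  induction l generalizing s with
  | nil => simp [chainCost]
  | cons x xs ih => simp [chainCost, ih]; ring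

lemma pathCost_append_two {α : Type*} (w0 : α → ℝ) (c : α → α → ℝ) (a b : α)
    (l : List α) :
    pathCost w0 c (l ++ [a, b]) = pathCost w0 c (l ++ [a]) + c a b := by
  cases l with
  | nil => simp [pathCost, chainCost]
  | cons x xs => simp [pathCost, chainCost_append_two]; ring

/-- The shortest-path payments `τᵢ*(vᵢ, v₋ᵢ) = −d(vᵢ)` yield a
dominant-strategy incentive compatible mechanism for agent `i`. -/
theorem shortest_path_payments_dsic {N X : Type*} [Fintype N] [DecidableEq N]
    (V : N → Set (X → ℝ)) (φ : (N → (X → ℝ)) → X)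
    (hSE : ∀ v : N → (X → ℝ), (∀ i, v i ∈ V i) →
      ∀ x : X, ∑ i, v i x ≤ ∑ i, v i (φ v))
    (i : N) (v : N → (X → ℝ)) (hv : ∀ j, v j ∈ V j)
    (d : (X → ℝ) → ℝ)
    (hd : ∀ t ∈ V i, IsLeast
      {x : ℝ | ∃ l : List (X → ℝ), (∀ u ∈ l, u ∈ V i) ∧
        x = pathCost (fun u => u (φ (Function.update v i u)))
          (fun s t' => t' (φ (Function.update v i t')) - t' (φ (Function.update v i s)))
          (l ++ [t])} (d t)) :
    ∀ vi ∈ V i, ∀ vi' ∈ V i,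
      vi (φ (Function.update v i vi')) + (-(d vi'))
        ≤ vi (φ (Function.update v i vi)) + (-(d vi)) := by
  intro vi hvi vi' hvi'
  set w0 : (X → ℝ) → ℝ := fun u => u (φ (Function.update v i u)) with hw0
  set c : (X → ℝ) → (X → ℝ) → ℝ :=
    fun s t' => t' (φ (Function.update v i t')) - t' (φ (Function.update v i s)) with hc
  obtain ⟨⟨l, hl, hval⟩, hlb⟩ := hd vi' hvi'
  have hmem : d vi' + c vi' vi ∈
      {x : ℝ | ∃ l : List (X → ℝ), (∀ u ∈ l, u ∈ V i) ∧
        x = pathCost w0 c (l ++ [vi])} := by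
    refine ⟨l ++ [vi'], ?_, ?_⟩
    · intro u hu
      rcases List.mem_append.mp hu with h | h
      · exact hl u h
      · simp at h; simpa [h] using hvi'
    · rw [List.append_assoc]
      simpa [pathCost_append_two, hval] using rfl
  have hle : d vi ≤ d vi' + c vi' vi := (hd vi hvi).2 hmem
  have : vi (φ (Function.update v i vi')) + (d vi - d vi')
      ≤ vi (φ (Function.update v i vi)) := by
    have := hle
    simp only [hc] at this
    linarith
  linarith
end

section
/- With the same shortest-path payments τ_i^*(v) := −(shortest distance from ⋆ to v_i in the graph G_i(v_{-i})), the proposed mechanism satisfies individual rationality: v_i(φ(v)) + τ_i^*(v) ≥ 0 for all i ∈ N and all type profiles v. -/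
/-- The proposed mechanism with shortest-path payments `τᵢ*(v) = −d(vᵢ)`
satisfies individual rationality. -/
theorem shortest_path_payments_ir {N X : Type*} [Fintype N] [DecidableEq N]
    (V : N → Set (X → ℝ)) (φ : (N → (X → ℝ)) → X)
    (hSE : ∀ v : N → (X → ℝ), (∀ i, v i ∈ V i) →
      ∀ x : X, ∑ i, v i x ≤ ∑ i, v i (φ v))
    (d : N → (N → (X → ℝ)) → (X → ℝ) → ℝ)
    (hd : ∀ (i : N) (v : N → (X → ℝ)), (∀ j, v j ∈ V j) → ∀ t ∈ V i, IsLeast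
      {x : ℝ | ∃ l : List (X → ℝ), (∀ u ∈ l, u ∈ V i) ∧
        x = pathCost (fun u => u (φ (Function.update v i u)))
          (fun s t' => t' (φ (Function.update v i t')) - t' (φ (Function.update v i s)))
          (l ++ [t])} (d i v t)) :
    ∀ v : N → (X → ℝ), (∀ j, v j ∈ V j) → ∀ i : N,
      0 ≤ v i (φ v) + (-(d i v (v i))) := by
  intro v hv i
  have h := (hd i v hv (v i) (hv i)).2
  have hmem : v i (φ v) ∈ {x : ℝ | ∃ l : List (X → ℝ), (∀ u ∈ l, u ∈ V i) ∧
      x = pathCost (fun u => u (φ (Function.update v i u)))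
        (fun s t' => t' (φ (Function.update v i t')) - t' (φ (Function.update v i s)))
        (l ++ [v i])} := by
    refine ⟨[], by simp, ?_⟩
    simp [pathCost, chainCost, Function.update_eq_self]
  have := h hmem
  linarith
end

section
/- Optimality of the shortest-path payments: let φ be a socially efficient option rule and let (φ, τ) be any mechanism satisfying DSIC and IR. Then for every agent i and type profile v, the proposed payment τ_i^*(v) = −(shortest distance from ⋆ to v_i in G_i(v_{-i})) satisfies τ_i^*(v) ≤ τ_i(v). Consequently the budget of the proposed mechanism, Σ_i τ_i^*(v), is at most the budget Σ_i τ_i(v) of any justified mechanism with option rule φ, for every v. -/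
/-!
For fixed `i` and `v₋ᵢ`, the payment `g t := τᵢ(t, v₋ᵢ)` is a potential on the graph `Gᵢ(v₋ᵢ)`:
DSIC for the true type `t` against the report `s` says exactly that the edge `s → t` weighs at
least `g s - g t`, and IR for the type `t` says that the edge `⋆ → t` weighs at least `-g t`.
Along any path `⋆ → ⋯ → vᵢ` these bounds telescope to `-τᵢ(v)`, so every path, and in particular
a shortest one, has length at least `-τᵢ(v)`.
-/

section Potential

variable {α : Type*} {S : Set α} {g : α → ℝ} {c : α → α → ℝ}

theorem sub_le_chainCost_append (hc : ∀ s ∈ S, ∀ t ∈ S, g s - g t ≤ c s t) {l : List α}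
    (hl : ∀ u ∈ l, u ∈ S) {s t : α} (hs : s ∈ S) (ht : t ∈ S) :
    g s - g t ≤ chainCost c s (l ++ [t]) := by
  induction l generalizing s with
  | nil => simpa [chainCost] using hc s hs t ht
  | cons u l ih =>
    have hu : u ∈ S := hl u List.mem_cons_self
    have hrest := ih (fun x hx => hl x (List.mem_cons_of_mem u hx)) hu
    simp only [List.cons_append, chainCost]
    linarith [hc s hs u hu]

theorem neg_le_pathCost_append {w0 : α → ℝ} (hw0 : ∀ t ∈ S, -g t ≤ w0 t)
    (hc : ∀ s ∈ S, ∀ t ∈ S, g s - g t ≤ c s t) {l : List α} (hl : ∀ u ∈ l, u ∈ S) {t : α}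
    (ht : t ∈ S) : -g t ≤ pathCost w0 c (l ++ [t]) := by
  cases l with
  | nil => simpa [pathCost, chainCost] using hw0 t ht
  | cons u l =>
    have hu : u ∈ S := hl u List.mem_cons_self
    have hchain := sub_le_chainCost_append hc (fun x hx => hl x (List.mem_cons_of_mem u hx)) hu ht
    simp only [List.cons_append, pathCost]
    linarith [hw0 u hu]

end Potential

section Mechanism

open Function

variable {N X : Type*} [DecidableEq N] {V : N → Set (X → ℝ)} {φ : (N → (X → ℝ)) → X}
  {τ : N → (N → (X → ℝ)) → ℝ} {v : N → (X → ℝ)} {i : N} {t : X → ℝ}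

theorem update_mem_types (hv : ∀ j, v j ∈ V j) (ht : t ∈ V i) :
    ∀ j, update v i t j ∈ V j :=
  (forall_update_iff v fun j w => w ∈ V j).2 ⟨ht, fun j _ => hv j⟩

theorem neg_payment_le_of_IR
    (hIR : ∀ v : N → (X → ℝ), (∀ j, v j ∈ V j) → ∀ i : N, 0 ≤ v i (φ v) + τ i v)
    (hv : ∀ j, v j ∈ V j) (ht : t ∈ V i) :
    -τ i (update v i t) ≤ t (φ (update v i t)) := by
  have h := hIR _ (update_mem_types hv ht) i
  rw [update_self] at h
  linarith

theorem payment_sub_le_of_DSIC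
    (hDSIC : ∀ v : N → (X → ℝ), (∀ j, v j ∈ V j) → ∀ i : N, ∀ vi' ∈ V i,
      v i (φ (update v i vi')) + τ i (update v i vi') ≤ v i (φ v) + τ i v)
    (hv : ∀ j, v j ∈ V j) {s : X → ℝ} (hs : s ∈ V i) (ht : t ∈ V i) :
    τ i (update v i s) - τ i (update v i t) ≤
      t (φ (update v i t)) - t (φ (update v i s)) := by
  have h := hDSIC _ (update_mem_types hv ht) i s hs
  simp only [update_idem, update_self] at h
  linarith

end Mechanism

theorem shortest_path_payments_optimal_general {N X : Type*} [Fintype N] [DecidableEq N]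
    (V : N → Set (X → ℝ)) (φ : (N → (X → ℝ)) → X)
    (τ : N → (N → (X → ℝ)) → ℝ)
    (hDSIC : ∀ v : N → (X → ℝ), (∀ j, v j ∈ V j) → ∀ i : N, ∀ vi' ∈ V i,
      v i (φ (Function.update v i vi')) + τ i (Function.update v i vi')
        ≤ v i (φ v) + τ i v)
    (hIR : ∀ v : N → (X → ℝ), (∀ j, v j ∈ V j) → ∀ i : N,
      0 ≤ v i (φ v) + τ i v)
    (d : N → (N → (X → ℝ)) → (X → ℝ) → ℝ)
    (hd : ∀ (i : N) (v : N → (X → ℝ)), (∀ j, v j ∈ V j) → ∀ t ∈ V i, IsLeast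
      {x : ℝ | ∃ l : List (X → ℝ), (∀ u ∈ l, u ∈ V i) ∧
        x = pathCost (fun u => u (φ (Function.update v i u)))
          (fun s t' => t' (φ (Function.update v i t')) - t' (φ (Function.update v i s)))
          (l ++ [t])} (d i v t)) :
    ∀ v : N → (X → ℝ), (∀ j, v j ∈ V j) →
      (∀ i : N, -(d i v (v i)) ≤ τ i v) ∧
      (∑ i, -(d i v (v i))) ≤ ∑ i, τ i v := by
  intro v hv
  have payment_ge : ∀ i, -(d i v (v i)) ≤ τ i v := by
    intro i
    obtain ⟨⟨l, hl, hdl⟩, -⟩ := hd i v hv (v i) (hv i)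
    have hpath := neg_le_pathCost_append (g := fun t => τ i (Function.update v i t))
      (fun t ht => neg_payment_le_of_IR hIR hv ht)
      (fun s hs t ht => payment_sub_le_of_DSIC hDSIC hv hs ht) hl (hv i)
    simp only [Function.update_eq_self] at hpath
    linarith
  exact ⟨payment_ge, Finset.sum_le_sum fun i _ => payment_ge i⟩

/-- Optimality of the shortest-path payments: any DSIC and IR mechanism with the
same socially efficient option rule pays every agent at least as much, hence
its budget is at least that of the proposed mechanism. -/
theorem shortest_path_payments_optimal {N X : Type*} [Fintype N] [DecidableEq N]
    (V : N → Set (X → ℝ)) (φ : (N → (X → ℝ)) → X)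
    (hSE : ∀ v : N → (X → ℝ), (∀ i, v i ∈ V i) →
      ∀ x : X, ∑ i, v i x ≤ ∑ i, v i (φ v))
    (τ : N → (N → (X → ℝ)) → ℝ)
    (hDSIC : ∀ v : N → (X → ℝ), (∀ j, v j ∈ V j) → ∀ i : N, ∀ vi' ∈ V i,
      v i (φ (Function.update v i vi')) + τ i (Function.update v i vi')
        ≤ v i (φ v) + τ i v)
    (hIR : ∀ v : N → (X → ℝ), (∀ j, v j ∈ V j) → ∀ i : N,
      0 ≤ v i (φ v) + τ i v)
    (d : N → (N → (X → ℝ)) → (X → ℝ) → ℝ)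
    (hd : ∀ (i : N) (v : N → (X → ℝ)), (∀ j, v j ∈ V j) → ∀ t ∈ V i, IsLeast
      {x : ℝ | ∃ l : List (X → ℝ), (∀ u ∈ l, u ∈ V i) ∧
        x = pathCost (fun u => u (φ (Function.update v i u)))
          (fun s t' => t' (φ (Function.update v i t')) - t' (φ (Function.update v i s)))
          (l ++ [t])} (d i v t)) :
    ∀ v : N → (X → ℝ), (∀ j, v j ∈ V j) →
      (∀ i : N, -(d i v (v i)) ≤ τ i v) ∧
      (∑ i, -(d i v (v i))) ≤ ∑ i, τ i v :=
  shortest_path_payments_optimal_general V φ τ hDSIC hIR d hd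
end

section
/- In a proper environment — one in which for every type profile v the social welfare S(·; v) is maximized by a unique option — the proposed shortest-path mechanism achieves the minimum budget achievable by any justified mechanism: for all v, Σ_i τ_i^*(v) = min over all mechanisms M = (φ, τ) satisfying SE, DSIC, and IR of Σ_i τ_i(v). -/
/-- Social efficiency of an option rule. -/
def SocEff {N X : Type*} [Fintype N] (V : N → Set (X → ℝ))
    (φ : (N → (X → ℝ)) → X) : Prop :=
  ∀ v : N → (X → ℝ), (∀ i, v i ∈ V i) → ∀ x : X, ∑ i, v i x ≤ ∑ i, v i (φ v)

/-- Dominant-strategy incentive compatibility. -/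
def DSIC {N X : Type*} [DecidableEq N] (V : N → Set (X → ℝ))
    (φ : (N → (X → ℝ)) → X) (τ : N → (N → (X → ℝ)) → ℝ) : Prop :=
  ∀ v : N → (X → ℝ), (∀ j, v j ∈ V j) → ∀ i : N, ∀ vi' ∈ V i,
    v i (φ (Function.update v i vi')) + τ i (Function.update v i vi')
      ≤ v i (φ v) + τ i v

/-- Individual rationality. -/
def IR {N X : Type*} (V : N → Set (X → ℝ))
    (φ : (N → (X → ℝ)) → X) (τ : N → (N → (X → ℝ)) → ℝ) : Prop :=
  ∀ v : N → (X → ℝ), (∀ j, v j ∈ V j) → ∀ i : N, 0 ≤ v i (φ v) + τ i v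

/-!
Fix an agent `i` and the others' reports `v₋ᵢ`, and view `Vᵢ` as the vertex set of a graph with
an extra source `⋆`: the edge `⋆ → u` has weight `u (φ (u, v₋ᵢ))` and the edge `s → t` has weight
`t (φ (t, v₋ᵢ)) - t (φ (s, v₋ᵢ))`. For a mechanism with option rule `φ`, DSIC and IR together say
exactly that `p = u ↦ -τᵢ (u, v₋ᵢ)` is a feasible potential of this graph: `p` is bounded by the
`⋆`-edges and satisfies `p t ≤ p s + c s t` along the others. Feasible potentials are bounded by
shortest-path distances, and the distance function is itself a feasible potential.
In a proper environment every SE rule coincides with `φs` on type profiles, so all justified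
mechanisms share the graph of `φs`, and `τᵢ* = -dist(⋆, ·)` minimises every payment, hence the
budget.
-/

open Function

section ShortestPath

variable {α : Type*} {S : Set α} {w0 : α → ℝ} {c : α → α → ℝ}

def pathCostsTo (S : Set α) (w0 : α → ℝ) (c : α → α → ℝ) (t : α) : Set ℝ :=
  {x | ∃ l : List α, (∀ u ∈ l, u ∈ S) ∧ x = pathCost w0 c (l ++ [t])}

def IsFeasiblePotential (S : Set α) (w0 : α → ℝ) (c : α → α → ℝ) (p : α → ℝ) : Prop :=
  (∀ u ∈ S, p u ≤ w0 u) ∧ ∀ s ∈ S, ∀ t ∈ S, p t ≤ p s + c s t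

@[simp]
lemma pathCost_singleton (t : α) : pathCost w0 c [t] = w0 t := by
  simp [pathCost, chainCost]

lemma chainCost_append_singleton (l : List α) (u t : α) :
    chainCost c u (l ++ [t]) = chainCost c u l + c (l.getLastD u) t := by
  induction l generalizing u with
  | nil => simp [chainCost]
  | cons a l ih =>
    simp only [List.cons_append, chainCost, ih, List.getLastD_cons]
    ring

lemma pathCost_append_singleton_append_singleton (l : List α) (s t : α) :
    pathCost w0 c (l ++ [s] ++ [t]) = pathCost w0 c (l ++ [s]) + c s t := by
  cases l with
  | nil => simp [pathCost, chainCost]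
  | cons a l =>
    simp only [List.cons_append, pathCost, chainCost_append_singleton (l ++ [s])]
    simp [add_assoc]

namespace IsFeasiblePotential

variable {p : α → ℝ}

lemma le_add_chainCost (hp : IsFeasiblePotential S w0 c p) {t : α} (ht : t ∈ S) :
    ∀ (l : List α) {u : α}, u ∈ S → (∀ x ∈ l, x ∈ S) → p t ≤ p u + chainCost c u (l ++ [t])
  | [], u, hu, _ => by simpa [chainCost] using hp.2 u hu t ht
  | a :: l, u, hu, hl => by
    have hua := hp.2 u hu a (hl a List.mem_cons_self)
    have hat := hp.le_add_chainCost ht l (hl a List.mem_cons_self)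
      fun x hx => hl x (List.mem_cons_of_mem a hx)
    simp only [List.cons_append, chainCost]
    linarith

lemma le_pathCost (hp : IsFeasiblePotential S w0 c p) {t : α} (ht : t ∈ S) :
    ∀ l : List α, (∀ x ∈ l, x ∈ S) → p t ≤ pathCost w0 c (l ++ [t])
  | [], _ => by simpa using hp.1 t ht
  | a :: l, hl => by
    have ha := hp.1 a (hl a List.mem_cons_self)
    have hat := hp.le_add_chainCost ht l (hl a List.mem_cons_self)
      fun x hx => hl x (List.mem_cons_of_mem a hx)
    simp only [List.cons_append, pathCost]
    linarith

lemma le_of_isLeast (hp : IsFeasiblePotential S w0 c p) {t : α} (ht : t ∈ S) {D : ℝ}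
    (hD : IsLeast (pathCostsTo S w0 c t) D) : p t ≤ D := by
  obtain ⟨l, hl, rfl⟩ := hD.1
  exact hp.le_pathCost ht l hl

lemma congr (hp : IsFeasiblePotential S w0 c p) {w0' : α → ℝ} {c' : α → α → ℝ} {p' : α → ℝ}
    (hw0 : Set.EqOn w0 w0' S) (hc : ∀ s ∈ S, ∀ t ∈ S, c s t = c' s t) (hp' : Set.EqOn p p' S) :
    IsFeasiblePotential S w0' c' p' := by
  refine ⟨fun u hu => ?_, fun s hs t ht => ?_⟩
  · rw [← hw0 hu, ← hp' hu]
    exact hp.1 u hu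
  · rw [← hc s hs t ht, ← hp' hs, ← hp' ht]
    exact hp.2 s hs t ht

end IsFeasiblePotential

lemma isFeasiblePotential_of_isLeast {D : α → ℝ}
    (hD : ∀ t ∈ S, IsLeast (pathCostsTo S w0 c t) (D t)) : IsFeasiblePotential S w0 c D := by
  refine ⟨fun t ht => (hD t ht).2 ⟨[], by simp, by simp⟩, fun s hs t ht => ?_⟩
  obtain ⟨l, hl, hs_eq⟩ := (hD s hs).1
  refine (hD t ht).2 ⟨l ++ [s], fun u hu => ?_, ?_⟩
  · rcases List.mem_append.1 hu with hu | hu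
    · exact hl u hu
    · rwa [List.mem_singleton.1 hu]
  · rw [pathCost_append_singleton_append_singleton, hs_eq]

end ShortestPath

section Mechanism

variable {N X : Type*} {V : N → Set (X → ℝ)}

lemma SocEff.unique [Fintype N]
    (hproper : ∀ v : N → X → ℝ, (∀ j, v j ∈ V j) → ∃! x : X, ∀ y, ∑ i, v i y ≤ ∑ i, v i x)
    {φ ψ : (N → X → ℝ) → X} (hφ : SocEff V φ) (hψ : SocEff V ψ) {v : N → X → ℝ}
    (hv : ∀ j, v j ∈ V j) : φ v = ψ v :=
  (hproper v hv).unique (hφ v hv) (hψ v hv)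

variable [DecidableEq N]

def sourceWeight (φ : (N → X → ℝ) → X) (v : N → X → ℝ) (i : N) (u : X → ℝ) : ℝ :=
  u (φ (update v i u))

def edgeWeight (φ : (N → X → ℝ) → X) (v : N → X → ℝ) (i : N) (s t : X → ℝ) : ℝ :=
  t (φ (update v i t)) - t (φ (update v i s))

@[simp]
lemma sourceWeight_update (φ : (N → X → ℝ) → X) (v : N → X → ℝ) (i : N) (u : X → ℝ) :
    sourceWeight φ (update v i u) i = sourceWeight φ v i := by
  ext; simp [sourceWeight]

@[simp]
lemma edgeWeight_update (φ : (N → X → ℝ) → X) (v : N → X → ℝ) (i : N) (u : X → ℝ) :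
    edgeWeight φ (update v i u) i = edgeWeight φ v i := by
  ext; simp [edgeWeight]

lemma update_mem {v : N → X → ℝ} (hv : ∀ j, v j ∈ V j) {i : N} {u : X → ℝ} (hu : u ∈ V i) :
    ∀ j, update v i u j ∈ V j :=
  (forall_update_iff v (p := fun j w => w ∈ V j)).2 ⟨hu, fun j _ => hv j⟩

lemma dsic_and_ir_iff {φ : (N → X → ℝ) → X} {τ : N → (N → X → ℝ) → ℝ} :
    DSIC V φ τ ∧ IR V φ τ ↔ ∀ v : N → X → ℝ, (∀ j, v j ∈ V j) → ∀ i,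
      IsFeasiblePotential (V i) (sourceWeight φ v i) (edgeWeight φ v i)
        fun u => -τ i (update v i u) := by
  constructor
  · rintro ⟨hD, hIR⟩ v hv i
    refine ⟨fun u hu => ?_, fun s hs t ht => ?_⟩
    · have h := hIR _ (update_mem hv hu) i
      simp only [update_self] at h
      simp only [sourceWeight]
      linarith
    · have h := hD _ (update_mem hv ht) i s hs
      simp only [update_idem, update_self] at h
      simp only [edgeWeight]
      linarith
  · intro hp
    refine ⟨fun v hv i u hu => ?_, fun v hv i => ?_⟩
    · have h := (hp v hv i).2 u hu (v i) (hv i)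
      simp only [edgeWeight, update_eq_self] at h
      linarith
    · have h := (hp v hv i).1 (v i) (hv i)
      simp only [sourceWeight, update_eq_self] at h
      linarith

lemma dsic_and_ir_of_isLeast {φ : (N → X → ℝ) → X} {d : N → (N → X → ℝ) → (X → ℝ) → ℝ}
    (hd : ∀ i v, (∀ j, v j ∈ V j) → ∀ t ∈ V i,
      IsLeast (pathCostsTo (V i) (sourceWeight φ v i) (edgeWeight φ v i) t) (d i v t)) :
    DSIC V φ (fun i w => -d i w (w i)) ∧ IR V φ (fun i w => -d i w (w i)) := by
  refine dsic_and_ir_iff.2 fun v hv i => ?_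
  refine (isFeasiblePotential_of_isLeast (hd i v hv)).congr (fun _ _ => rfl) (fun _ _ _ _ => rfl)
    fun u hu => ?_
  have h := hd i _ (update_mem hv hu) u hu
  rw [sourceWeight_update, edgeWeight_update] at h
  simpa using (hd i v hv u hu).unique h

lemma neg_le_of_isLeast {φ ψ : (N → X → ℝ) → X} {τ : N → (N → X → ℝ) → ℝ}
    (hφψ : ∀ w : N → X → ℝ, (∀ j, w j ∈ V j) → φ w = ψ w) (hD : DSIC V φ τ) (hIR : IR V φ τ)
    {v : N → X → ℝ} (hv : ∀ j, v j ∈ V j) (i : N) {D : ℝ}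
    (hdist : IsLeast (pathCostsTo (V i) (sourceWeight ψ v i) (edgeWeight ψ v i) (v i)) D) :
    -τ i v ≤ D := by
  have hp : IsFeasiblePotential (V i) (sourceWeight ψ v i) (edgeWeight ψ v i)
      fun u => -τ i (update v i u) :=
    (dsic_and_ir_iff.1 ⟨hD, hIR⟩ v hv i).congr
      (fun u hu => by simp only [sourceWeight, hφψ _ (update_mem hv hu)])
      (fun s hs t ht => by
        simp only [edgeWeight, hφψ _ (update_mem hv hs), hφψ _ (update_mem hv ht)])
      fun _ _ => rfl
  simpa using hp.le_of_isLeast (hv i) hdist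

end Mechanism

theorem proper_env_min_budget_general {N X : Type*} [Fintype N] [DecidableEq N]
    (V : N → Set (X → ℝ))
    (hproper : ∀ v : N → (X → ℝ), (∀ j, v j ∈ V j) →
      ∃! x : X, ∀ y : X, ∑ i, v i y ≤ ∑ i, v i x)
    (φs : (N → (X → ℝ)) → X) (hφs : SocEff V φs)
    (d : N → (N → (X → ℝ)) → (X → ℝ) → ℝ)
    (hd : ∀ (i : N) (v : N → (X → ℝ)), (∀ j, v j ∈ V j) → ∀ t ∈ V i, IsLeast
      {x : ℝ | ∃ l : List (X → ℝ), (∀ u ∈ l, u ∈ V i) ∧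
        x = pathCost (fun u => u (φs (Function.update v i u)))
          (fun s t' => t' (φs (Function.update v i t')) - t' (φs (Function.update v i s)))
          (l ++ [t])} (d i v t)) :
    ∀ v : N → (X → ℝ), (∀ j, v j ∈ V j) →
      IsLeast {b : ℝ | ∃ (φ : (N → (X → ℝ)) → X) (τ : N → (N → (X → ℝ)) → ℝ),
          SocEff V φ ∧ DSIC V φ τ ∧ IR V φ τ ∧ b = ∑ i, τ i v}
        (∑ i, -(d i v (v i))) := by
  intro v hv
  obtain ⟨hD, hIR⟩ := dsic_and_ir_of_isLeast hd
  refine ⟨⟨φs, fun i w => -d i w (w i), hφs, hD, hIR, rfl⟩, ?_⟩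
  rintro _ ⟨φ, τ, hφ, hDφ, hIRφ, rfl⟩
  exact Finset.sum_le_sum fun i _ => neg_le.1 <|
    neg_le_of_isLeast (fun w hw => hφ.unique hproper hφs hw) hDφ hIRφ hv i (hd i v hv _ (hv i))

/-- In a proper environment (unique social-welfare maximizer for every type
profile), the proposed shortest-path mechanism achieves the minimum budget
achievable by any justified (SE, DSIC, IR) mechanism. -/
theorem proper_env_min_budget {N X : Type*} [Fintype N] [DecidableEq N] [Fintype X]
    (V : N → Set (X → ℝ))
    (hproper : ∀ v : N → (X → ℝ), (∀ j, v j ∈ V j) →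
      ∃! x : X, ∀ y : X, ∑ i, v i y ≤ ∑ i, v i x)
    (φs : (N → (X → ℝ)) → X) (hφs : SocEff V φs)
    (d : N → (N → (X → ℝ)) → (X → ℝ) → ℝ)
    (hd : ∀ (i : N) (v : N → (X → ℝ)), (∀ j, v j ∈ V j) → ∀ t ∈ V i, IsLeast
      {x : ℝ | ∃ l : List (X → ℝ), (∀ u ∈ l, u ∈ V i) ∧
        x = pathCost (fun u => u (φs (Function.update v i u)))
          (fun s t' => t' (φs (Function.update v i t')) - t' (φs (Function.update v i s)))
          (l ++ [t])} (d i v t)) :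
    ∀ v : N → (X → ℝ), (∀ j, v j ∈ V j) →
      IsLeast {b : ℝ | ∃ (φ : (N → (X → ℝ)) → X) (τ : N → (N → (X → ℝ)) → ℝ),
          SocEff V φ ∧ DSIC V φ τ ∧ IR V φ τ ∧ b = ∑ i, τ i v}
        (∑ i, -(d i v (v i))) :=
  proper_env_min_budget_general V hproper φs hφs d hd
end

section
/- In the single-item auction environment where biddable prices are p_1 > p_2 > … > p_d > 0 and the option rule awards the item to the lowest-indexed agent among the highest bidders, if the winner i_1 has a strictly smaller index than any agent i_2 bidding the second-highest price p_{k_2}, then the shortest-path payment charged to the winner equals the second-highest bid: −τ*_{i_1}(v) = p_{k_2} (and equals p_{k_2−1} if i_1 > i_2). All losing agents pay zero. -/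
section Aux

variable {dd : ℕ} {p : Fin dd → ℝ} {W : Fin dd → Prop} [DecidablePred W] {q : ℝ}

lemma chain_lb (hp1 : ∀ k, W k → q ≤ p k) (hp2 : ∀ k, ¬W k → p k ≤ q) :
    ∀ (l : List (Fin dd)) (s t : Fin dd),
      ((if W t then q else 0) - (if W s then q else 0)) ≤
        chainCost (fun s t' => (if W t' then p t' else 0) - (if W s then p t' else 0)) s
          (l ++ [t])
  | [], s, t => by
      simp only [List.nil_append, chainCost, add_zero]
      by_cases hs : W s <;> by_cases ht : W t <;> simp only [hs, ht, if_true, if_false]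
      · linarith
      · have := hp2 t ht; linarith
      · have := hp1 t ht; linarith
      · linarith
  | u :: l, s, t => by
      have ih := chain_lb hp1 hp2 l u t
      simp only [List.cons_append, chainCost, List.append_eq] at ih ⊢
      by_cases hs : W s <;> by_cases hu : W u <;>
        simp only [hs, hu, if_true, if_false] at ih ⊢
      · linarith
      · have := hp2 u hu; linarith
      · have := hp1 u hu; linarith
      · linarith

lemma path_lb (hp1 : ∀ k, W k → q ≤ p k) (hp2 : ∀ k, ¬W k → p k ≤ q)
    (l : List (Fin dd)) (t : Fin dd) :
    (if W t then q else 0) ≤ pathCost (fun k => if W k then p k else 0)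
      (fun s t' => (if W t' then p t' else 0) - (if W s then p t' else 0)) (l ++ [t]) := by
  cases l with
  | nil =>
      simp only [List.nil_append, pathCost, chainCost, add_zero]
      by_cases ht : W t <;> simp only [ht, if_true, if_false]
      · exact hp1 t ht
      · exact le_rfl
  | cons u l' =>
      have h := chain_lb hp1 hp2 l' u t
      simp only [List.cons_append, pathCost, List.append_eq]
      by_cases hu : W u <;> simp only [hu, if_true, if_false, List.append_eq] at h ⊢
      · have := hp1 u hu; linarith
      · linarith

end Aux

section Aux2

variable {dd : ℕ} {p : Fin dd → ℝ} {W : Fin dd → Prop} [DecidablePred W] {q : ℝ}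

lemma isLeast_win (hp : StrictAnti p) (K' t : Fin dd) (hK : W K') (ht : W t)
    (hmax : ∀ k, W k → k ≤ K') (hlose : ∀ k, ¬W k → K' ≤ k) :
    IsLeast {x : ℝ | ∃ l : List (Fin dd), x = pathCost
      (fun k => if W k then p k else 0)
      (fun s t' => (if W t' then p t' else 0) - (if W s then p t' else 0))
      (l ++ [t])} (p K') := by
  constructor
  · exact ⟨[K'], by simp [pathCost, chainCost, hK, ht]⟩
  · rintro x ⟨l, rfl⟩
    have h := path_lb (q := p K') (fun k hk => hp.antitone (hmax k hk))
      (fun k hk => hp.antitone (hlose k hk)) l t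
    simpa [ht] using h

lemma isLeast_lose (hp : StrictAnti p) (t : Fin dd) (ht : ¬ W t)
    (mono : ∀ k j : Fin dd, W k → j ≤ k → W j) :
    IsLeast {x : ℝ | ∃ l : List (Fin dd), x = pathCost
      (fun k => if W k then p k else 0)
      (fun s t' => (if W t' then p t' else 0) - (if W s then p t' else 0))
      (l ++ [t])} 0 := by
  constructor
  · exact ⟨[], by simp [pathCost, chainCost, ht]⟩
  · rintro x ⟨l, rfl⟩
    by_cases hne : ∃ k, W k
    · obtain ⟨k0, hk0⟩ := hne
      have hSne : (Finset.univ.filter (fun k => W k)).Nonempty :=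
        ⟨k0, by simp [hk0]⟩
      set K' := (Finset.univ.filter (fun k => W k)).max' hSne with hK'
      have hKW : W K' := by
        have := (Finset.univ.filter (fun k => W k)).max'_mem hSne
        simpa using this
      have h := path_lb (p := p) (q := p K')
        (fun k (hk : W k) => hp.antitone (Finset.le_max' _ k (by simp [hk])))
        (fun k hk => hp.antitone (by
          by_contra hle
          exact hk (mono K' k hKW (le_of_lt (lt_of_not_ge hle))))) l t
      simpa [ht] using h
    · push_neg at hne
      have h := path_lb (p := p) (q := p ⟨0, t.pos⟩ + 1)
        (fun k hk => absurd hk (hne k))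
        (fun k _ => by
          have : p k ≤ p ⟨0, t.pos⟩ := hp.antitone (by simp [Fin.le_def])
          linarith) l t
      simpa [ht] using h

lemma win_mono {n : ℕ} (φ : (Fin n → Fin dd) → Fin n)
    (hφmax : ∀ (b : Fin n → Fin dd) (j : Fin n), b (φ b) ≤ b j)
    (hφtie : ∀ (b : Fin n → Fin dd) (j : Fin n), b j = b (φ b) → φ b ≤ j)
    (b : Fin n → Fin dd) (i : Fin n) (k k' : Fin dd)
    (hkk : k' ≤ k) (hw : φ (Function.update b i k) = i) :
    φ (Function.update b i k') = i := by
  by_contra hne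
  set j := φ (Function.update b i k') with hj
  have hji : j ≠ i := hne
  have h1 : b j ≤ k' := by
    have := hφmax (Function.update b i k') i
    rwa [← hj, Function.update_of_ne hji, Function.update_self] at this
  have h2 : k ≤ b j := by
    have := hφmax (Function.update b i k) j
    rwa [hw, Function.update_self, Function.update_of_ne hji] at this
  have hk'k : k' = k := le_antisymm hkk (h2.trans h1)
  have hbj : b j = k := le_antisymm (hk'k ▸ h1) h2
  have hle1 : j ≤ i := by
    have := hφtie (Function.update b i k') i
    rw [← hj, Function.update_self, Function.update_of_ne hji] at this
    exact this (hk'k.trans hbj.symm)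
  have hle2 : i ≤ j := by
    have := hφtie (Function.update b i k) j
    rw [hw, Function.update_of_ne hji, Function.update_self] at this
    exact this hbj
  exact hji (le_antisymm hle1 hle2)

end Aux2

/-- Discretized Vickrey auction: with biddable prices `p 0 > p 1 > ⋯ > 0`
(agent `i` bidding `b i` means type `vᵢ^{(b i)}`, valuing option `Xⱼ` at
`p (b i)` if `j = i` and `0` otherwise) and the lowest-index-among-highest-bids
option rule `φ`, the shortest-path payment of the winner `φ b` equals the
second-highest bid `p (b i2)` when `φ b < i2`, and `p (b i2 - 1)` when
`i2 < φ b`; all losing agents pay zero. -/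
theorem discrete_vickrey {n dd : ℕ} (p : Fin dd → ℝ)
    (hp : StrictAnti p) (hppos : ∀ k, 0 < p k)
    (φ : (Fin n → Fin dd) → Fin n)
    (hφmax : ∀ (b : Fin n → Fin dd) (j : Fin n), b (φ b) ≤ b j)
    (hφtie : ∀ (b : Fin n → Fin dd) (j : Fin n), b j = b (φ b) → φ b ≤ j)
    (b : Fin n → Fin dd)
    (d : Fin n → Fin dd → ℝ)
    (hd : ∀ (i : Fin n) (t : Fin dd), IsLeast
      {x : ℝ | ∃ l : List (Fin dd), x = pathCost
        (fun k => if φ (Function.update b i k) = i then p k else 0)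
        (fun s t' => (if φ (Function.update b i t') = i then p t' else 0)
          - (if φ (Function.update b i s) = i then p t' else 0))
        (l ++ [t])} (d i t))
    (i2 : Fin n) (hi2 : i2 ≠ φ b)
    (h2max : ∀ j : Fin n, j ≠ φ b → b i2 ≤ b j)
    (h2tie : ∀ j : Fin n, j ≠ φ b → b j = b i2 → i2 ≤ j) :
    ((φ b < i2 → d (φ b) (b (φ b)) = p (b i2)) ∧
      (i2 < φ b → d (φ b) (b (φ b)) =
        p ⟨(b i2 : ℕ) - 1, lt_of_le_of_lt (Nat.sub_le _ _) (b i2).isLt⟩)) ∧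
    (∀ i : Fin n, i ≠ φ b → d i (b i) = 0) := by
  have mono : ∀ (i : Fin n) (k j : Fin dd),
      φ (Function.update b i k) = i → j ≤ k → φ (Function.update b i j) = i :=
    fun i k j hw hj => win_mono φ hφmax hφtie b i k j hj hw
  have hW1 : φ (Function.update b (φ b) (b (φ b))) = φ b := by
    rw [Function.update_eq_self]
  refine ⟨⟨?_, ?_⟩, ?_⟩
  · -- case φ b < i2
    intro hlt
    have hWt2 : φ (Function.update b (φ b) (b i2)) = φ b := by
      by_contra hne
      set j := φ (Function.update b (φ b) (b i2)) with hj
      have hji : j ≠ φ b := hne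
      have h1 : b j ≤ b i2 := by
        have := hφmax (Function.update b (φ b) (b i2)) (φ b)
        rwa [← hj, Function.update_of_ne hji, Function.update_self] at this
      have hbj : b j = b i2 := le_antisymm h1 (h2max j hji)
      have hi2j : i2 ≤ j := h2tie j hji hbj
      have hjle : j ≤ φ b := by
        have := hφtie (Function.update b (φ b) (b i2)) (φ b)
        rw [Function.update_self, ← hj, Function.update_of_ne hji, hbj] at this
        exact this rfl
      exact absurd (lt_of_lt_of_le hlt (hi2j.trans hjle)) (lt_irrefl _)
    have hmaxk : ∀ k, φ (Function.update b (φ b) k) = φ b → k ≤ b i2 := by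
      intro k hWk
      by_contra hgt
      push_neg at hgt
      have := hφmax (Function.update b (φ b) k) i2
      rw [hWk, Function.update_self, Function.update_of_ne hi2] at this
      exact absurd (lt_of_le_of_lt this hgt) (lt_irrefl _)
    have hlosek : ∀ k, ¬(φ (Function.update b (φ b) k) = φ b) → b i2 ≤ k := by
      intro k hk
      by_contra h
      exact hk (mono (φ b) (b i2) k hWt2 (le_of_lt (lt_of_not_ge h)))
    exact (hd (φ b) (b (φ b))).unique
      (isLeast_win hp (b i2) (b (φ b)) hWt2 hW1 hmaxk hlosek)
  · -- case i2 < φ b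
    intro hlt
    have hb1lt : b (φ b) < b i2 := by
      rcases lt_or_eq_of_le (hφmax b i2) with h | h
      · exact h
      · exact absurd (hφtie b i2 h.symm) (not_le.mpr hlt)
    have hpos : 1 ≤ (b i2 : ℕ) := by
      have := Fin.lt_def.mp hb1lt
      omega
    have hWlt : ∀ k : Fin dd, k < b i2 → φ (Function.update b (φ b) k) = φ b := by
      intro k hk
      by_contra hne
      set j := φ (Function.update b (φ b) k) with hj
      have hji : j ≠ φ b := hne
      have h1 : b j ≤ k := by
        have := hφmax (Function.update b (φ b) k) (φ b)
        rwa [← hj, Function.update_of_ne hji, Function.update_self] at this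
      exact absurd ((h2max j hji).trans h1) (not_le.mpr hk)
    have hnW2 : ¬ (φ (Function.update b (φ b) (b i2)) = φ b) := by
      intro hw
      have := hφtie (Function.update b (φ b) (b i2)) i2
      rw [hw, Function.update_self, Function.update_of_ne hi2] at this
      exact absurd (this rfl) (not_le.mpr hlt)
    set K' : Fin dd := ⟨(b i2 : ℕ) - 1, lt_of_le_of_lt (Nat.sub_le _ _) (b i2).isLt⟩
      with hK'
    have hKlt : K' < b i2 := by
      rw [Fin.lt_def]
      simp only [hK']
      omega
    have hWK : φ (Function.update b (φ b) K') = φ b := hWlt K' hKlt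
    have hmaxk : ∀ k, φ (Function.update b (φ b) k) = φ b → k ≤ K' := by
      intro k hWk
      by_contra h
      push_neg at h
      have hbk : b i2 ≤ k := by
        rw [Fin.le_def]
        have := Fin.lt_def.mp h
        simp only [hK'] at this
        omega
      exact hnW2 (mono (φ b) k (b i2) hWk hbk)
    have hlosek2 : ∀ k, ¬(φ (Function.update b (φ b) k) = φ b) → K' ≤ k := by
      intro k hk
      by_contra h
      exact hk (hWlt k (lt_trans (lt_of_not_ge h) hKlt))
    exact (hd (φ b) (b (φ b))).unique
      (isLeast_win hp K' (b (φ b)) hWK hW1 hmaxk hlosek2)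
  · intro i hi
    have hnW : ¬ (φ (Function.update b i (b i)) = i) := by
      rw [Function.update_eq_self]
      exact fun h => hi h.symm
    exact (hd i (b i)).unique
      (isLeast_lose hp (b i) hnW (fun k j hw hj => win_mono φ hφmax hφtie b i k j hj hw))
end

section
/- Graph contraction preserves shortest distances: let G be the weighted directed graph on V_i ∪ {⋆} with edge weights c(⋆, t) = t(φ(t, v_{-i})) and c(s, t) = t(φ(t, v_{-i})) − t(φ(s, v_{-i})), and let G̃ be the contracted graph whose vertices are the distinct options {φ(v_i', v_{-i}) : v_i' ∈ V_i} plus a source ⋆̃, with edge weights c̃(⋆̃, Φ) = min{ u(Φ) : u ∈ V_i, φ(u, v_{-i}) = Φ } and c̃(Φ_1, Φ_2) = min{ u(Φ_2) − u(Φ_1) : u ∈ V_i, φ(u, v_{-i}) = Φ_2 }. Then for every v_i ∈ V_i, the shortest distance from ⋆ to v_i in G equals the shortest distance from ⋆̃ to φ(v_i, v_{-i}) in G̃. -/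
lemma chainCost_le_aux {α β : Type*} (c : α → α → ℝ) (c' : β → β → ℝ) (f : α → β)
    (P : α → Prop) (h : ∀ s t, P s → P t → c' (f s) (f t) ≤ c s t) :
    ∀ (l : List α) (s t : α), P s → P t → (∀ u ∈ l, P u) →
      chainCost c' (f s) (l.map f ++ [f t]) ≤ chainCost c s (l ++ [t]) := by
  intro l
  induction l with
  | nil =>
    intro s t hs ht _
    simp only [List.map_nil, List.nil_append, chainCost]
    linarith [h s t hs ht]
  | cons a l ih =>
    intro s t hs ht hl
    simp only [List.map_cons, List.cons_append, List.append_eq, chainCost]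
    have h1 := ih a t (hl a (by simp)) ht (fun u hu => hl u (by simp [hu]))
    have h2 := h s a hs (hl a (by simp))
    linarith

lemma pathCost_le_aux {α β : Type*} (w0 : α → ℝ) (c : α → α → ℝ)
    (w0' : β → ℝ) (c' : β → β → ℝ) (f : α → β) (P : α → Prop)
    (h0 : ∀ s, P s → w0' (f s) ≤ w0 s)
    (h : ∀ s t, P s → P t → c' (f s) (f t) ≤ c s t) :
    ∀ (l : List α) (t : α), P t → (∀ u ∈ l, P u) →
      pathCost w0' c' (l.map f ++ [f t]) ≤ pathCost w0 c (l ++ [t]) := by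
  intro l t ht hl
  cases l with
  | nil =>
    simp only [List.map_nil, List.nil_append, pathCost, chainCost]
    linarith [h0 t ht]
  | cons a l =>
    simp only [List.map_cons, List.cons_append, List.append_eq, pathCost]
    have h1 := chainCost_le_aux c c' f P h l a t (hl a (by simp)) ht
      (fun u hu => hl u (by simp [hu]))
    have h2 := h0 a (hl a (by simp))
    linarith

lemma exists_chain_aux {α β : Type*} (c : α → α → ℝ) (c' : β → β → ℝ) (f : α → β)
    (P : α → Prop) (Q : β → Prop)
    (hrep : ∀ (s : α) (b : β), P s → Q b → ∃ u, P u ∧ f u = b ∧ c' (f s) b = c s u)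
    (t₀ : α) (hQt : Q (f t₀)) (hzero : ∀ u, P u → f u = f t₀ → c u t₀ = 0) :
    ∀ (m : List β), (∀ y ∈ m, Q y) → ∀ s, P s →
      ∃ m' : List α, (∀ u ∈ m', P u) ∧
        chainCost c s (m' ++ [t₀]) = chainCost c' (f s) (m ++ [f t₀]) := by
  intro m
  induction m with
  | nil =>
    intro _ s hs
    obtain ⟨u, hu, hfu, hcu⟩ := hrep s (f t₀) hs hQt
    refine ⟨[u], by simpa using hu, ?_⟩
    simp only [List.nil_append, List.cons_append, List.append_eq, chainCost]
    rw [hzero u hu hfu]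
    linarith
  | cons b m ih =>
    intro hm s hs
    obtain ⟨u, hu, hfu, hcu⟩ := hrep s b hs (hm b (by simp))
    obtain ⟨m₂, hm₂, heq⟩ := ih (fun y hy => hm y (by simp [hy])) u hu
    refine ⟨u :: m₂, ?_, ?_⟩
    · intro x hx
      rcases List.mem_cons.mp hx with h | h
      · exact h ▸ hu
      · exact hm₂ x h
    · simp only [List.cons_append, List.append_eq, chainCost]
      rw [heq, hfu, hcu]

lemma exists_path_aux {α β : Type*} (w0 : α → ℝ) (c : α → α → ℝ)
    (w0' : β → ℝ) (c' : β → β → ℝ) (f : α → β) (P : α → Prop) (Q : β → Prop)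
    (hrep0 : ∀ b, Q b → ∃ u, P u ∧ f u = b ∧ w0' b = w0 u)
    (hrep : ∀ (s : α) (b : β), P s → Q b → ∃ u, P u ∧ f u = b ∧ c' (f s) b = c s u)
    (t₀ : α) (hQt : Q (f t₀)) (hzero : ∀ u, P u → f u = f t₀ → c u t₀ = 0) :
    ∀ (m : List β), (∀ y ∈ m, Q y) →
      ∃ m' : List α, (∀ u ∈ m', P u) ∧
        pathCost w0 c (m' ++ [t₀]) = pathCost w0' c' (m ++ [f t₀]) := by
  intro m hm
  cases m with
  | nil =>
    obtain ⟨u, hu, hfu, hwu⟩ := hrep0 (f t₀) hQt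
    refine ⟨[u], by simpa using hu, ?_⟩
    simp only [List.nil_append, List.cons_append, pathCost, chainCost]
    rw [hzero u hu hfu]
    linarith
  | cons b m =>
    obtain ⟨u, hu, hfu, hwu⟩ := hrep0 b (hm b (by simp))
    obtain ⟨m₂, hm₂, heq⟩ := exists_chain_aux c c' f P Q hrep t₀ hQt hzero m
      (fun y hy => hm y (by simp [hy])) u hu
    refine ⟨u :: m₂, ?_, ?_⟩
    · intro x hx
      rcases List.mem_cons.mp hx with h | h
      · exact h ▸ hu
      · exact hm₂ x h
    · simp only [List.cons_append, List.append_eq, pathCost]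
      rw [heq, hfu, hwu]

/-- Contracting vertices with a common selected option preserves shortest
distances: the shortest distance from `⋆` to `vᵢ` in the original graph `G`
equals the shortest distance from `⋆̃` to `φ(vᵢ, v₋ᵢ)` in the contracted
graph `G̃` over distinct options, with minimum-aggregated edge weights. -/
theorem contraction_preserves_distances {N X : Type*} [Fintype N] [DecidableEq N]
    (V : N → Set (X → ℝ)) (φ : (N → (X → ℝ)) → X)
    (hSE : ∀ v : N → (X → ℝ), (∀ i, v i ∈ V i) →
      ∀ x : X, ∑ i, v i x ≤ ∑ i, v i (φ v))
    (i : N) (v : N → (X → ℝ)) (hv : ∀ j, v j ∈ V j)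
    (dG : (X → ℝ) → ℝ)
    (hdG : ∀ t ∈ V i, IsLeast
      {x : ℝ | ∃ l : List (X → ℝ), (∀ u ∈ l, u ∈ V i) ∧
        x = pathCost (fun u => u (φ (Function.update v i u)))
          (fun s t' => t' (φ (Function.update v i t')) - t' (φ (Function.update v i s)))
          (l ++ [t])} (dG t))
    (cstar : X → ℝ) (ctil : X → X → ℝ)
    (hcs : ∀ Φ : X, Φ ∈ {x : X | ∃ u ∈ V i, φ (Function.update v i u) = x} →
      IsLeast {y : ℝ | ∃ u ∈ V i, φ (Function.update v i u) = Φ ∧ y = u Φ} (cstar Φ))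
    (hcc : ∀ Φ₁ Φ₂ : X, Φ₁ ∈ {x : X | ∃ u ∈ V i, φ (Function.update v i u) = x} →
      Φ₂ ∈ {x : X | ∃ u ∈ V i, φ (Function.update v i u) = x} →
      IsLeast {y : ℝ | ∃ u ∈ V i, φ (Function.update v i u) = Φ₂ ∧ y = u Φ₂ - u Φ₁}
        (ctil Φ₁ Φ₂))
    (dGt : X → ℝ)
    (hdGt : ∀ Φ : X, Φ ∈ {x : X | ∃ u ∈ V i, φ (Function.update v i u) = x} →
      IsLeast {x : ℝ | ∃ l : List X,
        (∀ y ∈ l, y ∈ {x : X | ∃ u ∈ V i, φ (Function.update v i u) = x}) ∧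
        x = pathCost cstar ctil (l ++ [Φ])} (dGt Φ)) :
    ∀ vi ∈ V i, dG vi = dGt (φ (Function.update v i vi)) := by
  intro vi hvi
  -- abbreviations
  let f : (X → ℝ) → X := fun u => φ (Function.update v i u)
  let w0 : (X → ℝ) → ℝ := fun u => u (f u)
  let c : (X → ℝ) → (X → ℝ) → ℝ := fun s t => t (f t) - t (f s)
  let S : Set X := {x : X | ∃ u ∈ V i, f u = x}
  have hΦ : f vi ∈ S := ⟨vi, hvi, rfl⟩
  have h0 : ∀ s, s ∈ V i → cstar (f s) ≤ w0 s := fun s hs =>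
    (hcs (f s) ⟨s, hs, rfl⟩).2 ⟨s, hs, rfl, rfl⟩
  have hle : ∀ s t, s ∈ V i → t ∈ V i → ctil (f s) (f t) ≤ c s t := fun s t hs ht =>
    (hcc (f s) (f t) ⟨s, hs, rfl⟩ ⟨t, ht, rfl⟩).2 ⟨t, ht, rfl, rfl⟩
  have hrep0 : ∀ b, b ∈ S → ∃ u, u ∈ V i ∧ f u = b ∧ cstar b = w0 u := by
    intro b hb
    obtain ⟨u, hu, hfu, heq⟩ := (hcs b hb).1
    exact ⟨u, hu, hfu, by show cstar b = u (f u); rw [show f u = b from hfu]; exact heq⟩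
  have hrep : ∀ (s : X → ℝ) (b : X), s ∈ V i → b ∈ S →
      ∃ u, u ∈ V i ∧ f u = b ∧ ctil (f s) b = c s u := by
    intro s b hs hb
    obtain ⟨u, hu, hfu, heq⟩ := (hcc (f s) b ⟨s, hs, rfl⟩ hb).1
    exact ⟨u, hu, hfu, by show ctil (f s) b = u (f u) - u (f s); rw [show f u = b from hfu]; exact heq⟩
  have hzero : ∀ u, u ∈ V i → f u = f vi → c u vi = 0 := by
    intro u hu hfu
    simp only [c, hfu, sub_self]
  obtain ⟨hmemG, hlbG⟩ := hdG vi hvi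
  obtain ⟨hmemGt, hlbGt⟩ := hdGt (f vi) hΦ
  apply le_antisymm
  · -- dG vi ≤ dGt (f vi)
    obtain ⟨l, hl, heq⟩ := hmemGt
    obtain ⟨m', hm', heq'⟩ := exists_path_aux w0 c cstar ctil f (· ∈ V i) (· ∈ S)
      hrep0 hrep vi hΦ hzero l hl
    exact hlbG ⟨m', hm', by rw [heq, ← heq']⟩
  · -- dGt (f vi) ≤ dG vi
    obtain ⟨l, hl, heq⟩ := hmemG
    have hb := pathCost_le_aux w0 c cstar ctil f (· ∈ V i) h0 hle l vi hvi hl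
    have hmem : pathCost cstar ctil (l.map f ++ [f vi]) ∈
        {x : ℝ | ∃ l' : List X, (∀ y ∈ l', y ∈ S) ∧
          x = pathCost cstar ctil (l' ++ [f vi])} :=
      ⟨l.map f, fun y hy => by
        obtain ⟨u, hu, rfl⟩ := List.mem_map.mp hy
        exact ⟨u, hl u hu, rfl⟩, rfl⟩
    calc dGt (f vi) ≤ pathCost cstar ctil (l.map f ++ [f vi]) := hlbGt hmem
      _ ≤ dG vi := heq ▸ hb
end
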